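/- arXiv:2007.02633 — 3 statements merged into one kernel-verified Lean document; each statement's English description precedes it below -/
import Mathlib

section
/- Under a correctly specified logistic regression model with true parameter θ₀ and local case-control sampling probability π = |Y − p(θ₀ᵀZ)|, the matrix V_π := E[(Y − p(θ₀ᵀZ))² Z Zᵀ / π] equals 2·E[p(θ₀ᵀZ)(1−p(θ₀ᵀZ)) Z Zᵀ], i.e., twice the Fisher information matrix. -/
open MeasureTheory Matrix

noncomputable def logistic (t : ℝ) : ℝ := Real.exp t / (1 + Real.exp t)

lemma logistic_pos (t : ℝ) : 0 < logistic t := by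
  unfold logistic; positivity

lemma logistic_lt_one (t : ℝ) : logistic t < 1 := by
  unfold logistic
  rw [div_lt_one (by positivity)]
  linarith [Real.exp_pos t]

lemma logistic_continuous : Continuous logistic :=
  Real.continuous_exp.div (continuous_const.add Real.continuous_exp)
    (fun t => by positivity)

/-- Under a correctly specified logistic model with LCC sampling probability
`π = |Y − p(θ₀ᵀZ)|`, one has `V_π = 2 E[p(θ₀ᵀZ)(1−p(θ₀ᵀZ)) Z Zᵀ]`. -/
theorem stmt_6 {Ω : Type*} [MeasurableSpace Ω] (μ : Measure Ω) [IsProbabilityMeasure μ]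
    {q : ℕ} (Z : Ω → Fin (q + 1) → ℝ) (hZmeas : Measurable Z)
    (hZ0 : ∀ ω, Z ω 0 = 1) (hZsq : Integrable (fun ω => ∑ i, (Z ω i) ^ 2) μ)
    (θ₀ : Fin (q + 1) → ℝ)
    (Y : Ω → ℝ) (hYmeas : Measurable Y) (hY01 : ∀ ω, Y ω = 0 ∨ Y ω = 1)
    (hcond : μ[Y | MeasurableSpace.comap Z inferInstance]
      =ᵐ[μ] fun ω => logistic (θ₀ ⬝ᵥ Z ω)) :
    (Matrix.of fun i j =>
        ∫ ω, (Y ω - logistic (θ₀ ⬝ᵥ Z ω)) ^ 2 * (Z ω i * Z ω j) /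
          |Y ω - logistic (θ₀ ⬝ᵥ Z ω)| ∂μ) =
      (2 : ℝ) • Matrix.of (fun i j =>
        ∫ ω, logistic (θ₀ ⬝ᵥ Z ω) * (1 - logistic (θ₀ ⬝ᵥ Z ω)) * (Z ω i * Z ω j) ∂μ) := by
  have hm : MeasurableSpace.comap Z inferInstance ≤ ‹MeasurableSpace Ω› := hZmeas.comap_le
  have hdotm : Measurable fun x : Fin (q + 1) → ℝ => θ₀ ⬝ᵥ x := by
    simp only [dotProduct]
    exact Finset.measurable_sum _ fun k _ => (measurable_pi_apply k).const_mul _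
  set P : (Fin (q + 1) → ℝ) → ℝ := fun x => logistic (θ₀ ⬝ᵥ x) with hP_def
  have hPm : Measurable P := logistic_continuous.measurable.comp hdotm
  set p : Ω → ℝ := fun ω => P (Z ω) with hp_def
  have hp_meas : Measurable p := hPm.comp hZmeas
  have hp01 : ∀ ω, 0 < p ω ∧ p ω < 1 := fun ω => ⟨logistic_pos _, logistic_lt_one _⟩
  have hZi_meas : ∀ i, Measurable fun ω => Z ω i := fun i =>
    (measurable_pi_apply i).comp hZmeas
  have hg_int : ∀ i j, Integrable (fun ω => Z ω i * Z ω j) μ := by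
    intro i j
    refine hZsq.mono ((hZi_meas i).mul (hZi_meas j)).aestronglyMeasurable ?_
    refine Filter.Eventually.of_forall fun ω => ?_
    have hS : ∀ k, Z ω k ^ 2 ≤ ∑ l, Z ω l ^ 2 := fun k =>
      Finset.single_le_sum (f := fun l => Z ω l ^ 2) (fun l _ => sq_nonneg _) (Finset.mem_univ k)
    have h1 : |Z ω i * Z ω j| ≤ (Z ω i ^ 2 + Z ω j ^ 2) / 2 := by
      rw [abs_mul]
      nlinarith [abs_nonneg (Z ω i), abs_nonneg (Z ω j), sq_abs (Z ω i), sq_abs (Z ω j),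
        sq_nonneg (|Z ω i| - |Z ω j|)]
    have h2 : (0:ℝ) ≤ ∑ l, Z ω l ^ 2 := Finset.sum_nonneg fun l _ => sq_nonneg _
    simp only [Real.norm_eq_abs, abs_of_nonneg h2]
    linarith [hS i, hS j]
  -- the key conditional expectation identity
  have key : ∀ (F : (Fin (q+1) → ℝ) → ℝ), Measurable F → (∀ x, |F x| ≤ 1) →
      ∀ i j, ∫ ω, Y ω * F (Z ω) * (Z ω i * Z ω j) ∂μ
        = ∫ ω, p ω * F (Z ω) * (Z ω i * Z ω j) ∂μ := by
    intro F hFm hFb i j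
    set h : Ω → ℝ := fun ω => F (Z ω) * (Z ω i * Z ω j) with hh_def
    have hh_sm : StronglyMeasurable[MeasurableSpace.comap Z inferInstance] h := by
      have hZc : Measurable[MeasurableSpace.comap Z inferInstance] Z := comap_measurable Z
      exact Measurable.stronglyMeasurable
        ((hFm.comp hZc).mul (((measurable_pi_apply i).comp hZc).mul
          ((measurable_pi_apply j).comp hZc)))
    have hbound : ∀ ω, ‖h ω‖ ≤ ‖Z ω i * Z ω j‖ := by
      intro ω
      simp only [Real.norm_eq_abs, hh_def]
      rw [abs_mul]
      calc |F (Z ω)| * |Z ω i * Z ω j| ≤ 1 * |Z ω i * Z ω j| :=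
            mul_le_mul_of_nonneg_right (hFb _) (abs_nonneg _)
        _ = |Z ω i * Z ω j| := one_mul _
    have hh_int : Integrable h μ := by
      exact (hg_int i j).mono (hh_sm.mono hm).aestronglyMeasurable
        (Filter.Eventually.of_forall hbound)
    have hY_int : Integrable Y μ := by
      refine (integrable_const (1:ℝ)).mono hYmeas.aestronglyMeasurable ?_
      refine Filter.Eventually.of_forall fun ω => ?_
      rcases hY01 ω with h | h <;> simp [h]
    have hhY_int : Integrable (h * Y) μ := by
      refine hh_int.mono (hh_int.aestronglyMeasurable.mul hYmeas.aestronglyMeasurable) ?_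
      refine Filter.Eventually.of_forall fun ω => ?_
      simp only [Real.norm_eq_abs, Pi.mul_apply]
      rw [abs_mul]
      have hYb : |Y ω| ≤ 1 := by rcases hY01 ω with h' | h' <;> simp [h']
      calc |h ω| * |Y ω| ≤ |h ω| * 1 := mul_le_mul_of_nonneg_left hYb (abs_nonneg _)
        _ = |h ω| := mul_one _
    have pull : μ[h * Y | MeasurableSpace.comap Z inferInstance]
        =ᵐ[μ] h * μ[Y | MeasurableSpace.comap Z inferInstance] :=
      condExp_mul_of_stronglyMeasurable_left hh_sm hhY_int hY_int
    have e1 : ∫ ω, Y ω * F (Z ω) * (Z ω i * Z ω j) ∂μ = ∫ ω, (h * Y) ω ∂μ := by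
      apply integral_congr_ae; refine Filter.Eventually.of_forall fun ω => ?_
      simp only [Pi.mul_apply, hh_def]; ring
    have e2 : ∫ ω, (h * Y) ω ∂μ
        = ∫ ω, (μ[h * Y | MeasurableSpace.comap Z inferInstance]) ω ∂μ :=
      (integral_condExp hm).symm
    have e3 : ∫ ω, (μ[h * Y | MeasurableSpace.comap Z inferInstance]) ω ∂μ
        = ∫ ω, h ω * p ω ∂μ := by
      apply integral_congr_ae
      filter_upwards [pull, hcond] with ω h1 h2
      rw [h1]; simp only [Pi.mul_apply]; rw [h2]
    rw [e1, e2, e3]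
    apply integral_congr_ae; refine Filter.Eventually.of_forall fun ω => ?_
    simp only [hh_def, hp_def]; ring
  -- pointwise simplification of the LHS integrand
  have hpt : ∀ i j ω,
      (Y ω - p ω) ^ 2 * (Z ω i * Z ω j) / |Y ω - p ω|
        = Y ω * (1 - 2 * p ω) * (Z ω i * Z ω j) + p ω * (Z ω i * Z ω j) := by
    intro i j ω
    obtain ⟨hp0, hp1⟩ := hp01 ω
    have habs : |Y ω - p ω| = Y ω * (1 - 2 * p ω) + p ω := by
      rcases hY01 ω with h | h
      · rw [h, show (0:ℝ) - p ω = -(p ω) by ring, abs_neg, abs_of_pos hp0]; ring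
      · rw [h, abs_of_pos (by linarith : (0:ℝ) < 1 - p ω)]; ring
    have hne : Y ω - p ω ≠ 0 := by
      rcases hY01 ω with h | h <;> rw [h] <;> intro hc <;> nlinarith
    rw [div_eq_iff (abs_ne_zero.mpr hne),
      show Y ω * (1 - 2 * p ω) * (Z ω i * Z ω j) + p ω * (Z ω i * Z ω j)
        = (Y ω * (1 - 2 * p ω) + p ω) * (Z ω i * Z ω j) by ring,
      ← habs, ← sq_abs (Y ω - p ω)]
    ring
  ext i j
  simp only [Matrix.smul_apply, Matrix.of_apply, smul_eq_mul]
  rw [integral_congr_ae (Filter.Eventually.of_forall (hpt i j))]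
  have hint1 : Integrable (fun ω => Y ω * (1 - 2 * p ω) * (Z ω i * Z ω j)) μ := by
    refine (hg_int i j).mono ((hYmeas.mul (measurable_const.sub
      (hp_meas.const_mul 2))).mul ((hZi_meas i).mul (hZi_meas j))).aestronglyMeasurable ?_
    refine Filter.Eventually.of_forall fun ω => ?_
    simp only [Real.norm_eq_abs]
    rw [abs_mul, abs_mul]
    obtain ⟨hp0, hp1⟩ := hp01 ω
    have hYb : |Y ω| ≤ 1 := by rcases hY01 ω with h | h <;> simp [h]
    have hF : |1 - 2 * p ω| ≤ 1 := by rw [abs_le]; constructor <;> linarith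
    calc |Y ω| * |1 - 2 * p ω| * |Z ω i * Z ω j|
        ≤ 1 * 1 * |Z ω i * Z ω j| := by
          apply mul_le_mul_of_nonneg_right _ (abs_nonneg _)
          exact mul_le_mul hYb hF (abs_nonneg _) zero_le_one
      _ = |Z ω i * Z ω j| := by ring
  have hint2 : Integrable (fun ω => p ω * (Z ω i * Z ω j)) μ := by
    refine (hg_int i j).mono (hp_meas.mul ((hZi_meas i).mul (hZi_meas j))).aestronglyMeasurable ?_
    refine Filter.Eventually.of_forall fun ω => ?_
    simp only [Real.norm_eq_abs]
    rw [abs_mul]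
    obtain ⟨hp0, hp1⟩ := hp01 ω
    have hpb : |p ω| ≤ 1 := by rw [abs_le]; constructor <;> linarith
    calc |p ω| * |Z ω i * Z ω j| ≤ 1 * |Z ω i * Z ω j| :=
          mul_le_mul_of_nonneg_right hpb (abs_nonneg _)
      _ = |Z ω i * Z ω j| := one_mul _
  have hint3 : Integrable (fun ω => p ω * (1 - 2 * P (Z ω)) * (Z ω i * Z ω j)) μ := by
    refine (hg_int i j).mono ((hp_meas.mul (measurable_const.sub
      ((hPm.comp hZmeas).const_mul 2))).mul
      ((hZi_meas i).mul (hZi_meas j))).aestronglyMeasurable ?_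
    refine Filter.Eventually.of_forall fun ω => ?_
    simp only [Real.norm_eq_abs]
    rw [abs_mul, abs_mul]
    obtain ⟨hp0, hp1⟩ := hp01 ω
    have hpb : |p ω| ≤ 1 := by rw [abs_le]; constructor <;> linarith
    have hF : |1 - 2 * P (Z ω)| ≤ 1 := by
      have hq0 : (0:ℝ) < P (Z ω) := logistic_pos _
      have hq1 : P (Z ω) < 1 := logistic_lt_one _
      rw [abs_le]; constructor <;> linarith
    calc |p ω| * |1 - 2 * P (Z ω)| * |Z ω i * Z ω j|
        ≤ 1 * 1 * |Z ω i * Z ω j| := by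
          apply mul_le_mul_of_nonneg_right _ (abs_nonneg _)
          exact mul_le_mul hpb hF (abs_nonneg _) zero_le_one
      _ = |Z ω i * Z ω j| := by ring
  rw [integral_add hint1 hint2]
  have hkey := key (fun x => 1 - 2 * P x) (measurable_const.sub (hPm.const_mul 2))
    (fun x => by
      have h0 := logistic_pos (θ₀ ⬝ᵥ x); have h1 := logistic_lt_one (θ₀ ⬝ᵥ x)
      rw [abs_le]; constructor <;> simp only [hP_def] <;> linarith) i j
  rw [show (fun ω => Y ω * (1 - 2 * p ω) * (Z ω i * Z ω j))
      = fun ω => Y ω * (1 - 2 * P (Z ω)) * (Z ω i * Z ω j) from rfl,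
    hkey, ← integral_add hint3 hint2, ← integral_const_mul]
  apply integral_congr_ae; refine Filter.Eventually.of_forall fun ω => ?_
  simp only [hp_def]; ring
end

section
/- Consequently, if π = |Y − p(θ₀ᵀZ)| under a correctly specified logistic model and the Fisher information matrix A = E[p(θ₀ᵀZ)(1−p(θ₀ᵀZ)) Z Zᵀ] is invertible, then the sandwich matrix A^{-1} V_π A^{-1} equals 2 A^{-1}, i.e., twice the asymptotic variance of the full-sample MLE. -/
/-!
For `Y ∈ {0, 1}` and `p ∈ [0, 1]` one has `(Y - p)² / |Y - p| = |Y - p| = p + (1 - 2p) Y`.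
Conditioning on `Z` replaces `Y` by `p = p(θ₀ᵀZ)` against any function of `Z`, so
`E[|Y - p| Z Zᵀ] = E[(p + (1 - 2p) p) Z Zᵀ] = 2A`. Hence `V_π = 2A` and
`A⁻¹ V_π A⁻¹ = 2A⁻¹`.
-/

open MeasureTheory Matrix

@[fun_prop]
lemma measurable_logistic : Measurable logistic := by unfold logistic; fun_prop

lemma sq_div_abs (x : ℝ) : x ^ 2 / |x| = |x| := by
  rw [← sq_abs, sq, mul_self_div_self]

lemma abs_sub_eq_of_eq_zero_or_eq_one {y p : ℝ} (hy : y = 0 ∨ y = 1) (hp₀ : 0 ≤ p) (hp₁ : p ≤ 1) :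
    |y - p| = (1 - 2 * p) * y + p := by
  rcases hy with rfl | rfl
  · rw [zero_sub, abs_neg, abs_of_nonneg hp₀]; ring
  · rw [abs_of_nonneg (by linarith)]; ring

section

variable {Ω ι : Type*} {m m₀ : MeasurableSpace Ω} {μ : Measure Ω}

lemma integrable_mul_apply_of_integrable_sum_sq [Fintype ι] {Z : Ω → ι → ℝ}
    (hZ : AEStronglyMeasurable Z μ) (hZsq : Integrable (fun ω => ∑ k, Z ω k ^ 2) μ) (i j : ι) :
    Integrable (fun ω => Z ω i * Z ω j) μ := by
  refine hZsq.mono ?_ (.of_forall fun ω => ?_)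
  · have := hZ.aemeasurable
    exact (by fun_prop : AEMeasurable (fun ω => Z ω i * Z ω j) μ).aestronglyMeasurable
  have hi := Finset.single_le_sum (fun k _ => sq_nonneg (Z ω k)) (Finset.mem_univ i)
  have hj := Finset.single_le_sum (fun k _ => sq_nonneg (Z ω k)) (Finset.mem_univ j)
  rw [Real.norm_eq_abs, Real.norm_eq_abs, abs_mul,
    abs_of_nonneg (Finset.sum_nonneg fun k _ => sq_nonneg (Z ω k))]
  nlinarith [sq_abs (Z ω i), sq_abs (Z ω j), sq_nonneg (|Z ω i| - |Z ω j|)]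

lemma integral_mul_eq_of_condExp_ae_eq (hm : m ≤ m₀) [SigmaFinite (μ.trim hm)]
    {f Y p : Ω → ℝ} (hf : StronglyMeasurable[m] f) (hfY : Integrable (fun ω => f ω * Y ω) μ)
    (hY : Integrable Y μ) (hcond : μ[Y | m] =ᵐ[μ] p) :
    ∫ ω, f ω * Y ω ∂μ = ∫ ω, f ω * p ω ∂μ := by
  rw [← Pi.mul_def, ← integral_condExp hm]
  refine integral_congr_ae ?_
  filter_upwards [condExp_mul_of_stronglyMeasurable_left hf hfY hY, hcond] with ω hpull hp
  rw [hpull, Pi.mul_apply, hp]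

lemma integral_abs_sub_mul_eq_of_condExp_ae_eq [IsFiniteMeasure μ] (hm : m ≤ m₀)
    {Y p g : Ω → ℝ} (hYm : AEStronglyMeasurable Y μ) (hY : ∀ ω, Y ω = 0 ∨ Y ω = 1)
    (hp : StronglyMeasurable[m] p) (hp₀ : ∀ ω, 0 ≤ p ω) (hp₁ : ∀ ω, p ω ≤ 1)
    (hg : StronglyMeasurable[m] g) (hg_int : Integrable g μ) (hcond : μ[Y | m] =ᵐ[μ] p) :
    ∫ ω, |Y ω - p ω| * g ω ∂μ = 2 * ∫ ω, p ω * (1 - p ω) * g ω ∂μ := by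
  have hY_bound : ∀ ω, ‖Y ω‖ ≤ 1 := fun ω => by rcases hY ω with h | h <;> simp [h]
  have hp_bound : ∀ ω, ‖p ω‖ ≤ 1 := fun ω => by
    rw [Real.norm_eq_abs, abs_of_nonneg (hp₀ ω)]; exact hp₁ ω
  have hY_int : Integrable Y μ := .of_bound hYm 1 (.of_forall hY_bound)
  set f : Ω → ℝ := fun ω => (1 - 2 * p ω) * g ω
  have hc : StronglyMeasurable[m] fun ω => 1 - 2 * p ω :=
    stronglyMeasurable_const.sub (hp.const_mul 2)
  have hf : StronglyMeasurable[m] f := hc.mul hg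
  have hf_int : Integrable f μ :=
    hg_int.bdd_mul (c := 1) (hc.mono hm).aestronglyMeasurable
      (.of_forall fun ω => by
        rw [Real.norm_eq_abs, abs_le]; constructor <;> linarith [hp₀ ω, hp₁ ω])
  have hfY_int : Integrable (fun ω => f ω * Y ω) μ := hf_int.mul_bdd hYm (.of_forall hY_bound)
  have hfp_int : Integrable (fun ω => f ω * p ω) μ :=
    hf_int.mul_bdd (hp.mono hm).aestronglyMeasurable (.of_forall hp_bound)
  have hpg_int : Integrable (fun ω => p ω * g ω) μ :=
    hg_int.bdd_mul (hp.mono hm).aestronglyMeasurable (.of_forall hp_bound)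
  calc ∫ ω, |Y ω - p ω| * g ω ∂μ = ∫ ω, f ω * Y ω + p ω * g ω ∂μ := by
        refine integral_congr_ae (.of_forall fun ω => ?_)
        simp only [f, abs_sub_eq_of_eq_zero_or_eq_one (hY ω) (hp₀ ω) (hp₁ ω)]; ring
    _ = ∫ ω, f ω * p ω + p ω * g ω ∂μ := by
        rw [integral_add hfY_int hpg_int, integral_add hfp_int hpg_int,
          integral_mul_eq_of_condExp_ae_eq hm hf hfY_int hY_int hcond]
    _ = 2 * ∫ ω, p ω * (1 - p ω) * g ω ∂μ := by
        rw [← integral_const_mul]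
        exact integral_congr_ae (.of_forall fun ω => by simp only [f]; ring)

end

theorem stmt_7_general {Ω : Type*} [MeasurableSpace Ω] (μ : Measure Ω) [IsProbabilityMeasure μ]
    {q : ℕ} (Z : Ω → Fin (q + 1) → ℝ) (hZmeas : Measurable Z)
    (hZsq : Integrable (fun ω => ∑ i, (Z ω i) ^ 2) μ)
    (θ₀ : Fin (q + 1) → ℝ)
    (Y : Ω → ℝ) (hYmeas : Measurable Y) (hY01 : ∀ ω, Y ω = 0 ∨ Y ω = 1)
    (hcond : μ[Y | MeasurableSpace.comap Z inferInstance]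
      =ᵐ[μ] fun ω => logistic (θ₀ ⬝ᵥ Z ω))
    (A Vπ : Matrix (Fin (q + 1)) (Fin (q + 1)) ℝ)
    (hA : A = Matrix.of fun i j =>
      ∫ ω, logistic (θ₀ ⬝ᵥ Z ω) * (1 - logistic (θ₀ ⬝ᵥ Z ω)) * (Z ω i * Z ω j) ∂μ)
    (hApd : A.PosDef)
    (hV : Vπ = Matrix.of fun i j =>
      ∫ ω, (Y ω - logistic (θ₀ ⬝ᵥ Z ω)) ^ 2 * (Z ω i * Z ω j) /
        |Y ω - logistic (θ₀ ⬝ᵥ Z ω)| ∂μ) :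
    A⁻¹ * Vπ * A⁻¹ = (2 : ℝ) • A⁻¹ := by
  have hZ_comap : Measurable[MeasurableSpace.comap Z inferInstance] Z := comap_measurable Z
  have hVA : Vπ = (2 : ℝ) • A := by
    ext i j
    simp only [hV, hA, Matrix.smul_apply, Matrix.of_apply, smul_eq_mul, mul_div_right_comm,
      sq_div_abs]
    refine integral_abs_sub_mul_eq_of_condExp_ae_eq hZmeas.comap_le
      hYmeas.aestronglyMeasurable hY01 (by unfold dotProduct; fun_prop)
      (fun ω => (logistic_pos _).le) (fun ω => (logistic_lt_one _).le) (by fun_prop)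
      (integrable_mul_apply_of_integrable_sum_sq hZmeas.aestronglyMeasurable hZsq i j) hcond
  rw [hVA, Matrix.mul_smul, Matrix.smul_mul,
    Matrix.nonsing_inv_mul A (isUnit_iff_ne_zero.mpr hApd.det_pos.ne'), one_mul]

/-- Under the correctly specified logistic model with LCC sampling,
the sandwich matrix `A⁻¹ V_π A⁻¹` equals `2 A⁻¹`, twice the asymptotic
variance of the full-sample MLE. -/
theorem stmt_7 {Ω : Type*} [MeasurableSpace Ω] (μ : Measure Ω) [IsProbabilityMeasure μ]
    {q : ℕ} (Z : Ω → Fin (q + 1) → ℝ) (hZmeas : Measurable Z)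
    (hZ0 : ∀ ω, Z ω 0 = 1) (hZsq : Integrable (fun ω => ∑ i, (Z ω i) ^ 2) μ)
    (θ₀ : Fin (q + 1) → ℝ)
    (Y : Ω → ℝ) (hYmeas : Measurable Y) (hY01 : ∀ ω, Y ω = 0 ∨ Y ω = 1)
    (hcond : μ[Y | MeasurableSpace.comap Z inferInstance]
      =ᵐ[μ] fun ω => logistic (θ₀ ⬝ᵥ Z ω))
    (A Vπ : Matrix (Fin (q + 1)) (Fin (q + 1)) ℝ)
    (hA : A = Matrix.of fun i j =>
      ∫ ω, logistic (θ₀ ⬝ᵥ Z ω) * (1 - logistic (θ₀ ⬝ᵥ Z ω)) * (Z ω i * Z ω j) ∂μ)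
    (hApd : A.PosDef)
    (hV : Vπ = Matrix.of fun i j =>
      ∫ ω, (Y ω - logistic (θ₀ ⬝ᵥ Z ω)) ^ 2 * (Z ω i * Z ω j) /
        |Y ω - logistic (θ₀ ⬝ᵥ Z ω)| ∂μ) :
    A⁻¹ * Vπ * A⁻¹ = (2 : ℝ) • A⁻¹ :=
  stmt_7_general μ Z hZmeas hZsq θ₀ Y hYmeas hY01 hcond A Vπ hA hApd hV
end

section
/- Among all measurable π with 0 ≤ π ≤ 1, π > 0 on {T > 0}, and E[π] ≤ r, the functional E[T²/π] (with 0/0 := 0) is minimized by π* = min(cT, 1) where c is the largest constant with E[min(cT,1)] ≤ r. -/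
open MeasureTheory

lemma ptwise (t c p : ℝ) (hc : 0 < c) (ht : 0 ≤ t) (hp0 : 0 ≤ p) (hp1 : p ≤ 1)
    (hpos : 0 < t → 0 < p) :
    t ^ 2 / min (c * t) 1 + min (c * t) 1 / c ^ 2 ≤ t ^ 2 / p + p / c ^ 2 := by
  rcases eq_or_lt_of_le ht with h0 | h0
  · simp [← h0]
    positivity
  · have hp : 0 < p := hpos h0
    rcases le_or_gt (c * t) 1 with hct | hct
    · rw [min_eq_left hct]
      have e : t ^ 2 / p + p / c ^ 2 - (t ^ 2 / (c * t) + (c * t) / c ^ 2)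
          = (t * c - p) ^ 2 / (p * c ^ 2) := by
        field_simp
        ring
      have h := div_nonneg (sq_nonneg (t * c - p)) (by positivity : (0:ℝ) ≤ p * c ^ 2)
      linarith
    · rw [min_eq_right hct.le]
      have e : t ^ 2 / p + p / c ^ 2 - (t ^ 2 / 1 + 1 / c ^ 2)
          = (1 - p) * (t ^ 2 * c ^ 2 - p) / (p * c ^ 2) := by
        field_simp
        ring
      have hnum : 0 ≤ (1 - p) * (t ^ 2 * c ^ 2 - p) := by
        apply mul_nonneg (by linarith)
        nlinarith
      have h := div_nonneg hnum (by positivity : (0:ℝ) ≤ p * c ^ 2)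
      linarith

/-- Among all `π` with `0 ≤ π ≤ 1`, `π > 0` on `{T > 0}`, and `E[π] ≤ r`,
the objective `E[T²/π]` (with `0/0 := 0`) is minimized by `π* = min(cT, 1)`
where `c` is the largest constant with `E[min(cT,1)] ≤ r`. -/
theorem stmt_12 {Ω : Type*} [MeasurableSpace Ω] (μ : Measure Ω) [IsProbabilityMeasure μ]
    (T : Ω → ℝ) (hTmeas : Measurable T) (hT0 : ∀ ω, 0 ≤ T ω)
    (hT2int : Integrable (fun ω => T ω ^ 2) μ)
    (r : ℝ) (hr : 0 < r ∧ r < 1) (hrP : r < (μ {ω | 0 < T ω}).toReal)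
    (c : ℝ) (hc : 0 < c)
    (hcmax : IsGreatest {c' : ℝ | (∫ ω, min (c' * T ω) 1 ∂μ) ≤ r} c) :
    ∀ π : Ω → ℝ, Measurable π → (∀ ω, 0 ≤ π ω ∧ π ω ≤ 1) →
      (∀ ω, 0 < T ω → 0 < π ω) → (∫ ω, π ω ∂μ) ≤ r →
      Integrable (fun ω => T ω ^ 2 / π ω) μ →
      (∫ ω, T ω ^ 2 / min (c * T ω) 1 ∂μ) ≤ ∫ ω, T ω ^ 2 / π ω ∂μ := by
  intro π hπmeas hπ01 hπpos hπr hπint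
  -- integrability of T
  have hTint : Integrable T μ := by
    refine Integrable.mono' ((integrable_const 1).add hT2int) hTmeas.aestronglyMeasurable
      (ae_of_all _ fun ω => ?_)
    rw [Real.norm_eq_abs, abs_of_nonneg (hT0 ω)]
    simp only [Pi.add_apply]
    nlinarith [hT0 ω, sq_nonneg (T ω - 1)]
  -- integrability of bounded measurable functions
  have hbdd : ∀ (f : Ω → ℝ), Measurable f → (∀ ω, 0 ≤ f ω ∧ f ω ≤ 1) → Integrable f μ := by
    intro f hf h01
    refine Integrable.mono' (integrable_const 1) hf.aestronglyMeasurable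
      (ae_of_all _ fun ω => ?_)
    rw [Real.norm_eq_abs, abs_of_nonneg (h01 ω).1]
    exact (h01 ω).2
  have hminmeas : ∀ c' : ℝ, Measurable (fun ω => min (c' * T ω) 1) :=
    fun c' => (measurable_const.mul hTmeas).min measurable_const
  have hmin01 : ∀ c' : ℝ, 0 ≤ c' → ∀ ω, 0 ≤ min (c' * T ω) 1 ∧ min (c' * T ω) 1 ≤ 1 :=
    fun c' hc' ω => ⟨le_min (mul_nonneg hc' (hT0 ω)) one_pos.le, min_le_right _ _⟩
  have hminint : ∀ c' : ℝ, 0 ≤ c' → Integrable (fun ω => min (c' * T ω) 1) μ :=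
    fun c' hc' => hbdd _ (hminmeas c') (hmin01 c' hc')
  -- Step 1: ∫ min(cT,1) = r
  have hIT : 0 ≤ ∫ ω, T ω ∂μ := integral_nonneg hT0
  have hEq : (∫ ω, min (c * T ω) 1 ∂μ) = r := by
    by_contra hne
    have hlt : (∫ ω, min (c * T ω) 1 ∂μ) < r := lt_of_le_of_ne hcmax.1 hne
    set F := ∫ ω, min (c * T ω) 1 ∂μ with hF
    set δ := (r - F) / ((∫ ω, T ω ∂μ) + 1) with hδ
    have hδpos : 0 < δ := div_pos (by linarith) (by linarith)
    have hkey : (∫ ω, min ((c + δ) * T ω) 1 ∂μ) ≤ F + δ * ∫ ω, T ω ∂μ := by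
      have hmono : ∀ ω, min ((c + δ) * T ω) 1 ≤ min (c * T ω) 1 + δ * T ω := by
        intro ω
        have h1 : (c + δ) * T ω = c * T ω + δ * T ω := by ring
        have h2 : 0 ≤ δ * T ω := mul_nonneg hδpos.le (hT0 ω)
        rw [h1]
        rcases le_total (c * T ω) 1 with h | h
        · calc min (c * T ω + δ * T ω) 1 ≤ c * T ω + δ * T ω := min_le_left _ _
            _ = min (c * T ω) 1 + δ * T ω := by rw [min_eq_left h]
        · calc min (c * T ω + δ * T ω) 1 ≤ 1 := min_le_right _ _
            _ ≤ min (c * T ω) 1 + δ * T ω := by rw [min_eq_right h]; linarith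
      calc (∫ ω, min ((c + δ) * T ω) 1 ∂μ)
          ≤ ∫ ω, (min (c * T ω) 1 + δ * T ω) ∂μ := by
            refine integral_mono (hminint _ (by linarith)) ?_ hmono
            exact (hminint c hc.le).add (hTint.const_mul δ)
        _ = F + δ * ∫ ω, T ω ∂μ := by
            rw [integral_add (hminint c hc.le) (hTint.const_mul δ), integral_const_mul]
    have hδI : δ * ∫ ω, T ω ∂μ < r - F := by
      have : δ * ((∫ ω, T ω ∂μ) + 1) = r - F := by
        rw [hδ]; field_simp
      nlinarith
    have hmem : c + δ ∈ {c' : ℝ | (∫ ω, min (c' * T ω) 1 ∂μ) ≤ r} := by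
      simp only [Set.mem_setOf_eq]
      linarith
    have := hcmax.2 hmem
    linarith
  -- Step 2: integrability of the objective at π*
  have hObjStarMeas : Measurable (fun ω => T ω ^ 2 / min (c * T ω) 1) :=
    (hTmeas.pow_const 2).div (hminmeas c)
  have hObjStarInt : Integrable (fun ω => T ω ^ 2 / min (c * T ω) 1) μ := by
    refine Integrable.mono' ((integrable_const (1 / c ^ 2)).add hT2int)
      hObjStarMeas.aestronglyMeasurable (ae_of_all _ fun ω => ?_)
    rw [Real.norm_eq_abs, abs_of_nonneg]
    · rcases eq_or_lt_of_le (hT0 ω) with h0 | h0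
      · simp [← h0]
        positivity
      · rcases le_or_gt (c * T ω) 1 with h | h
        · rw [min_eq_left h]
          have e : T ω ^ 2 / (c * T ω) = T ω / c := by
            rw [sq]; field_simp
          rw [e]
          have : T ω ≤ 1 / c := by
            rw [le_div_iff₀ hc]; linarith [mul_comm c (T ω)]
          have h2 : T ω / c ≤ 1 / c ^ 2 := by
            rw [div_le_div_iff₀ hc (by positivity)]
            nlinarith
          simp only [Pi.add_apply]
          nlinarith [sq_nonneg (T ω)]
        · rw [min_eq_right h.le]
          simp only [div_one, Pi.add_apply]
          have : 0 < 1 / c ^ 2 := by positivity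
          linarith
    · apply div_nonneg (sq_nonneg _)
      exact le_min (mul_nonneg hc.le (hT0 ω)) one_pos.le
  -- Step 3: integrate the pointwise inequality
  have hπInt : Integrable π μ := hbdd π hπmeas hπ01
  have hmain : (∫ ω, (T ω ^ 2 / min (c * T ω) 1 + min (c * T ω) 1 / c ^ 2) ∂μ)
      ≤ ∫ ω, (T ω ^ 2 / π ω + π ω / c ^ 2) ∂μ := by
    refine integral_mono (hObjStarInt.add ((hminint c hc.le).div_const _))
      (hπint.add (hπInt.div_const _)) fun ω => ?_
    exact ptwise (T ω) c (π ω) hc (hT0 ω) (hπ01 ω).1 (hπ01 ω).2 (hπpos ω)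
  rw [integral_add hObjStarInt ((hminint c hc.le).div_const _),
    integral_add hπint (hπInt.div_const _), integral_div, integral_div, hEq] at hmain
  have hdiv : (∫ ω, π ω ∂μ) / c ^ 2 ≤ r / c ^ 2 :=
    div_le_div_of_nonneg_right hπr (by positivity)
  linarith
end
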